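/- For every mu in a_Z*, the operator on V given by v |-> sum over w in W0 of X^{w mu} . v (via the level -(l+h) action) maps the submodule I into I. Consequently the level -(l+h) action of K[X] on V induces a well-defined K-linear action of the ring of symmetric functions K[X]^{W0} on the abstract Fock space F_l = V/I, given on classes by (sum over w in W0 of X^{w mu}) . |gamma> = sum over w in W0 of |gamma - l*w0(w mu)> for all mu, gamma in a_Z*. (Proposition 1.1) -/

import Mathlib

open Finsupp LaurentPolynomial

noncomputable section

/-- The ring `K = ℤ[t^{1/2}, t^{-1/2}]`: Laurent polynomials over `ℤ` in the
variable `T = t^{1/2}`. -/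
abbrev K : Type := LaurentPolynomial ℤ

/-- The element `t^{1/2}` of `K`. -/
def tHalf : K := T 1

/-- The bar involution of `K`, determined by `t^{1/2} ↦ t^{-1/2}`. -/
def conjK : K →+* K := (LaurentPolynomial.invert (R := ℤ)).toRingHom

/-- `V`: the free `K`-module with basis `{|λ⟩ : λ ∈ a_ℤ^*}` indexed by the weight
lattice `Λ`. -/
abbrev V (Λ : Type) : Type := Λ →₀ K

/-- The basis element `|λ⟩` of `V`. -/
def ket {Λ : Type} (lam : Λ) : V Λ := Finsupp.single lam 1

/-- The multiplicative group structure on `AddAut Λ` of the older Mathlib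
(`g * h = h.trans g`); current Mathlib makes `AddAut Λ` an additive group. -/
instance instGroupAddAutOld {Λ : Type} [AddCommGroup Λ] : Group (AddAut Λ) where
  mul g h := AddEquiv.trans h g
  one := AddEquiv.refl _
  inv := AddEquiv.symm
  mul_assoc _ _ _ := rfl
  one_mul _ := rfl
  mul_one _ := rfl
  inv_mul_cancel := AddEquiv.self_trans_symm

/-- The data of (the weight lattice of) a reduced finite crystallographic root
system: the weight lattice `Λ = a_ℤ^*`, the (finite) Weyl group `W = W₀` acting
on `Λ` through `σ`, the simple reflections `s i`, the simple roots `α i`, the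
pairings `pair i = ⟨·, α_i^∨⟩` with the simple coroots, the finite set
`posRoots` of pairings `⟨·, α^∨⟩` with the coroots `α^∨` of the positive roots
`α ∈ R⁺`, the half-sum `ρ` of the positive roots (assumed to lie in `Λ`), the
longest element `w0` (of length `posRoots.card`), and the sign character `det`. -/
structure RootData (Λ W : Type) [AddCommGroup Λ] [Group W] [Fintype W] where
  n : ℕ
  σ : W →* AddAut Λ
  s : Fin n → W
  α : Fin n → Λ
  pair : Fin n → Λ →+ ℤ
  posRoots : Finset (Λ →+ ℤ)
  ρ : Λ
  w0 : W
  det : W →* ℤˣ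
  /-- `s i` acts on `Λ` as the reflection in the simple root `α i`. -/
  reflect : ∀ (i : Fin n) (lam : Λ), σ (s i) lam = lam - pair i lam • α i
  /-- crystallographic normalization `⟨α_i, α_i^∨⟩ = 2`. -/
  pair_alpha_self : ∀ i : Fin n, pair i (α i) = 2
  /-- the simple reflections are involutions. -/
  s_sq : ∀ i : Fin n, s i * s i = 1
  /-- `W₀` is generated by the simple reflections. -/
  gen_s : Subgroup.closure (Set.range s) = ⊤
  /-- `⟨ρ, α_i^∨⟩ = 1` for every simple coroot. -/
  pair_rho : ∀ i : Fin n, pair i ρ = 1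
  /-- each simple coroot is the coroot of a positive root. -/
  pair_mem : ∀ i : Fin n, pair i ∈ posRoots
  /-- the Weyl group permutes the (co)roots up to sign. -/
  roots_perm : ∀ (w : W), ∀ f ∈ posRoots,
    (∃ g ∈ posRoots, ∀ lam, f (σ w lam) = g lam) ∨
    (∃ g ∈ posRoots, ∀ lam, f (σ w lam) = - g lam)
  /-- `w0` sends every positive root to a negative root (so `w0` is the longest
  element, of length `posRoots.card`). -/
  w0_neg : ∀ f ∈ posRoots, ∃ g ∈ posRoots, ∀ lam, f (σ w0 lam) = - g lam
  /-- `det` is the sign character. -/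
  det_s : ∀ i : Fin n, det (s i) = -1

namespace RootData

variable {Λ W : Type} [AddCommGroup Λ] [Group W] [Fintype W]

/-- The dot action `w ∘ λ = w(λ + ρ) - ρ`. -/
def dot (D : RootData Λ W) (w : W) (lam : Λ) : Λ := D.σ w (lam + D.ρ) - D.ρ

/-- `λ^{(1)} = λ - j • α_i`, where `⟨λ + ρ, α_i^∨⟩ = k l + j` with `j ∈ {0, …, l-1}`
(relative to the index `i`). -/
def lamOne (D : RootData Λ W) (l : ℕ) (i : Fin D.n) (lam : Λ) : Λ :=
  lam - (D.pair i (lam + D.ρ) % (l : ℤ)) • D.α i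

/-- A weight `λ` is dominant when `⟨λ + ρ, α_i^∨⟩ > 0` for all `i`. -/
def dominant (D : RootData Λ W) (lam : Λ) : Prop :=
  ∀ i : Fin D.n, 0 < D.pair i (lam + D.ρ)

/-- `λ₀ ∈ Π_l`: an `l`-restricted dominant weight. -/
def restricted (D : RootData Λ W) (l : ℕ) (lam : Λ) : Prop :=
  D.dominant lam ∧ ∀ i : Fin D.n, D.pair i lam ≤ (l : ℤ) - 1

/-- The `K`-submodule `I` of `V` spanned by the straightening elements
(a), (b), (c). -/
def Idl (D : RootData Λ W) (l : ℕ) : Submodule K (V Λ) :=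
  Submodule.span K
    ({x | ∃ (i : Fin D.n) (lam : Λ),
        (∃ k : ℤ, 0 ≤ k ∧ D.pair i (lam + D.ρ) = k * l) ∧
        x = ket (D.dot (D.s i) lam) + ket lam} ∪
     {x | ∃ (i : Fin D.n) (lam : Λ),
        0 < D.pair i (lam + D.ρ) ∧ D.pair i (lam + D.ρ) < (l : ℤ) ∧
        x = ket (D.dot (D.s i) lam) + tHalf • ket lam} ∪
     {x | ∃ (i : Fin D.n) (lam : Λ),
        (l : ℤ) < D.pair i (lam + D.ρ) ∧ ¬ ((l : ℤ) ∣ D.pair i (lam + D.ρ)) ∧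
        x = ket (D.dot (D.s i) lam) + tHalf • ket (D.dot (D.s i) (D.lamOne l i lam)) +
            ket (D.lamOne l i lam) + tHalf • ket lam})

/-- The operator `X^μ · : V → V` of the level `-(l+h)` action:
`X^μ · |γ⟩ = |γ - l w0(μ)⟩`. -/
def opX (D : RootData Λ W) (l : ℕ) (mu : Λ) : V Λ →ₗ[K] V Λ :=
  Finsupp.lmapDomain K K (fun gam => gam - l • D.σ D.w0 mu)

/-- The level `-(l+h)` action of an element `g` of the group algebra `K[X]`
(with `K`-coefficients) on `V`. -/
def actKX (D : RootData Λ W) (l : ℕ) (g : Λ →₀ K) (v : V Λ) : V Λ :=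
  g.sum fun mu c => c • (D.opX l mu v)

/-- The level `-(l+h)` action of an element `g` of `ℤ[X]` on `V`. -/
def actZX (D : RootData Λ W) (l : ℕ) (g : Λ →₀ ℤ) (v : V Λ) : V Λ :=
  g.sum fun mu c => c • (D.opX l mu v)

/-- `N_λ = #{α ∈ R⁺ : ⟨λ + ρ, α^∨⟩ ∈ lℤ}`. -/
def Ncount (D : RootData Λ W) (l : ℕ) (lam : Λ) : ℕ :=
  (D.posRoots.filter (fun f => (l : ℤ) ∣ f (lam + D.ρ))).card

/-- The coefficient `(-1)^{l(w0)} (t^{-1/2})^{l(w0) - N_λ}` appearing in the bar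
involution, where `l(w0) = Card R⁺`. -/
def barCoef (D : RootData Λ W) (l : ℕ) (lam : Λ) : K :=
  ((-1 : K) ^ D.posRoots.card) * T ((D.Ncount l lam : ℤ) - (D.posRoots.card : ℤ))

/-- The bar involution of `V`:
`bar(c|λ⟩) = c̄ (-1)^{l(w0)} (t^{-1/2})^{l(w0)-N_λ} |w0 ∘ λ⟩`. -/
def barV (D : RootData Λ W) (l : ℕ) (v : V Λ) : V Λ :=
  v.sum fun lam c => (conjK c * D.barCoef l lam) • ket (D.dot D.w0 lam)

/-- `V⁺`: the `ℤ[t^{1/2}]`-span of the `|μ⟩` inside `V`, i.e. the elements all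
of whose coefficients are polynomials in `t^{1/2}`. -/
def inVplus {Λ : Type} (b : V Λ) : Prop :=
  ∀ (mu : Λ) (m : ℤ), m < 0 → (b mu).coeff m = 0

/-- Membership in `I + t^{1/2} V⁺`. -/
def inIplus (D : RootData Λ W) (l : ℕ) (x : V Λ) : Prop :=
  ∃ a ∈ D.Idl l, ∃ b : V Λ, inVplus b ∧ x = a + tHalf • b

/-- The Weyl numerator `∑_{w ∈ W₀} det(w) X^{w ν}` in `K[X]`. -/
def weylNumer (D : RootData Λ W) (nu : Λ) : AddMonoidAlgebra K Λ :=
  ∑ w : W, ((D.det w : ℤˣ) : ℤ) • AddMonoidAlgebra.single (D.σ w nu) (1 : K)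

/-- `g` is the Weyl character `s_ν ∈ ℤ[X]^{W₀} ⊆ K[X]`: it has integer
coefficients, is `W₀`-invariant, and satisfies the Weyl character formula
`(∑_w det(w) X^{wρ}) · s_ν = ∑_w det(w) X^{w(ν+ρ)}`. -/
def IsWeylChar (D : RootData Λ W) (nu : Λ) (g : AddMonoidAlgebra K Λ) : Prop :=
  (∀ mu : Λ, ∃ z : ℤ, g.coeff mu = (z : K)) ∧
  (∀ (w : W) (mu : Λ), g.coeff (D.σ w mu) = g.coeff mu) ∧
  D.weylNumer D.ρ * g = D.weylNumer (nu + D.ρ)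

end RootData

end

/-!
Write `τ_β` for the translation `|γ⟩ ↦ |γ - l β⟩` of `V`, so that `X^ν` acts as `τ_{w₀ ν}`.
Translating by `l β` changes `⟨λ + ρ, α_i^∨⟩` by a multiple of `l`, commutes with
`λ ↦ λ^{(1)}`, and `s_i ∘ (λ - l s_i β) = s_i ∘ λ - l β`. Hence for a straightening relation `r`
attached to `s_i`, `τ_β r + τ_{s_i β} r` is a sum of two relations of the same type (the two
translates of a relation (b) add up to one relation (c)), and `τ_β r` is itself a relation when
`s_i β = β`. Relations (a) and (c) make sense for every `λ` with `l ∣ ⟨λ + ρ, α_i^∨⟩`, resp.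
`l ∤ ⟨λ + ρ, α_i^∨⟩`, and still lie in `I`. For a `W₀`-invariant `∑ c_ν X^ν`, pairing `ν` with
`w₀⁻¹ s_i w₀ ν` then shows that `∑ c_ν X^ν r ∈ I`.
-/

theorem Int.emod_two_mul_emod_sub (M l : ℤ) : (2 * (M % l) - M) % l = M % l := by
  rw [show 2 * (M % l) - M = M % l - l * (M / l) by rw [Int.emod_def]; ring,
    Int.sub_mul_emod_self_left, Int.emod_emod]

theorem Submodule.sum_smul_mem_of_involutive {R M ι : Type*} [Ring R] [AddCommGroup M]
    [Module R M] (p : Submodule R M) (S : Finset ι) (u : ι → ι) (hS : ∀ k ∈ S, u k ∈ S)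
    (hu : ∀ k, u (u k) = k) (c : ι → R) (hc : ∀ k, c (u k) = c k) (f : ι → M)
    (hpair : ∀ k, f k + f (u k) ∈ p) (hfix : ∀ k, u k = k → f k ∈ p) :
    ∑ k ∈ S, c k • f k ∈ p := by
  rw [← Submodule.Quotient.mk_eq_zero, ← Submodule.mkQ_apply, map_sum]
  refine Finset.sum_involution (fun k _ => u k) (fun k _ => ?_) (fun k _ hne hk => ?_)
    hS (fun k _ => hu k)
  · rw [Submodule.mkQ_apply, Submodule.mkQ_apply, hc, ← Submodule.Quotient.mk_add, ← smul_add,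
      Submodule.Quotient.mk_smul, (Submodule.Quotient.mk_eq_zero p).2 (hpair k), smul_zero]
  · refine hne ?_
    rw [Submodule.mkQ_apply, Submodule.Quotient.mk_smul,
      (Submodule.Quotient.mk_eq_zero p).2 (hfix k hk), smul_zero]

noncomputable section

def translateV {Λ : Type} [AddCommGroup Λ] (l : ℕ) (β : Λ) : V Λ →ₗ[K] V Λ :=
  Finsupp.lmapDomain K K (fun γ => γ - l • β)

theorem translateV_ket {Λ : Type} [AddCommGroup Λ] (l : ℕ) (β γ : Λ) :
    translateV l β (ket γ) = ket (γ - l • β) := by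
  simp [translateV, ket, Finsupp.mapDomain_single]

namespace RootData

variable {Λ W : Type} [AddCommGroup Λ] [Group W] [Fintype W] (D : RootData Λ W) (l : ℕ)

theorem opX_eq_translateV (ν : Λ) : D.opX l ν = translateV l (D.σ D.w0 ν) := rfl

theorem σ_mul_apply (a b : W) (x : Λ) : D.σ (a * b) x = D.σ a (D.σ b x) := by
  rw [map_mul]; rfl

theorem σ_s_σ_s (i : Fin D.n) (x : Λ) : D.σ (D.s i) (D.σ (D.s i) x) = x := by
  rw [← σ_mul_apply, D.s_sq, map_one]; rfl

theorem conj_s_mul_conj_s (i : Fin D.n) :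
    D.w0⁻¹ * D.s i * D.w0 * (D.w0⁻¹ * D.s i * D.w0) = 1 := by
  rw [show D.w0⁻¹ * D.s i * D.w0 * (D.w0⁻¹ * D.s i * D.w0) = D.w0⁻¹ * (D.s i * D.s i) * D.w0
    by group, D.s_sq]
  group

theorem σ_w0_σ_conj_s (i : Fin D.n) (x : Λ) :
    D.σ D.w0 (D.σ (D.w0⁻¹ * D.s i * D.w0) x) = D.σ (D.s i) (D.σ D.w0 x) := by
  rw [← σ_mul_apply, ← σ_mul_apply, show D.w0 * (D.w0⁻¹ * D.s i * D.w0) = D.s i * D.w0 by group]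

theorem pair_σ_s (i : Fin D.n) (x : Λ) : D.pair i (D.σ (D.s i) x) = - D.pair i x := by
  rw [D.reflect, map_sub, map_zsmul, D.pair_alpha_self, smul_eq_mul]; ring

theorem pair_eq_zero_of_σ_s_eq {i : Fin D.n} {x : Λ} (h : D.σ (D.s i) x = x) :
    D.pair i x = 0 := by
  have h2 := D.pair_σ_s i x
  rw [h] at h2
  omega

theorem dot_add (w : W) (lam x : Λ) : D.dot w (lam + x) = D.dot w lam + D.σ w x := by
  simp only [dot, add_right_comm lam x, map_add]; abel

theorem dot_s_eq (i : Fin D.n) (lam : Λ) :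
    D.dot (D.s i) lam = lam - D.pair i (lam + D.ρ) • D.α i := by
  rw [dot, D.reflect]; abel

theorem dot_s_dot_s (i : Fin D.n) (lam : Λ) : D.dot (D.s i) (D.dot (D.s i) lam) = lam := by
  rw [dot, dot, sub_add_cancel, σ_s_σ_s, add_sub_cancel_right]

theorem pair_dot_s_add_ρ (i : Fin D.n) (lam : Λ) :
    D.pair i (D.dot (D.s i) lam + D.ρ) = - D.pair i (lam + D.ρ) := by
  rw [dot, sub_add_cancel, pair_σ_s]

theorem dot_s_sub_nsmul_σ_s (i : Fin D.n) (lam β : Λ) :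
    D.dot (D.s i) (lam - l • D.σ (D.s i) β) = D.dot (D.s i) lam - l • β := by
  rw [sub_eq_add_neg, dot_add, map_neg, map_nsmul, σ_s_σ_s, ← sub_eq_add_neg]

theorem pair_sub_nsmul_add_ρ (i : Fin D.n) (lam β : Λ) :
    D.pair i (lam - l • β + D.ρ) = D.pair i (lam + D.ρ) - l * D.pair i β := by
  rw [sub_add_eq_add_sub, map_sub, map_nsmul, nsmul_eq_mul]

theorem lamOne_sub_nsmul (i : Fin D.n) (lam β : Λ) :
    D.lamOne l i (lam - l • β) = D.lamOne l i lam - l • β := by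
  rw [lamOne, lamOne, pair_sub_nsmul_add_ρ, Int.sub_mul_emod_self_left]; abel

theorem dvd_pair_sub_nsmul_add_ρ_iff (i : Fin D.n) (lam x : Λ) :
    (l : ℤ) ∣ D.pair i (lam - l • x + D.ρ) ↔ (l : ℤ) ∣ D.pair i (lam + D.ρ) := by
  rw [pair_sub_nsmul_add_ρ]
  exact dvd_sub_left (dvd_mul_right _ _)

theorem pair_lamOne_add_ρ (i : Fin D.n) (lam : Λ) :
    D.pair i (D.lamOne l i lam + D.ρ) =
      D.pair i (lam + D.ρ) - 2 * (D.pair i (lam + D.ρ) % l) := by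
  rw [lamOne, sub_add_eq_add_sub, map_sub, map_zsmul, D.pair_alpha_self, smul_eq_mul, mul_comm]

theorem lamOne_eq_dot_s {i : Fin D.n} {lam : Λ} (h₀ : 0 ≤ D.pair i (lam + D.ρ))
    (hl : D.pair i (lam + D.ρ) < l) : D.lamOne l i lam = D.dot (D.s i) lam := by
  rw [lamOne, dot_s_eq, Int.emod_eq_of_lt h₀ hl]

-- The spanning elements (a), (b), (c) of `I`, for arbitrary `λ`.
def straightenA (i : Fin D.n) (lam : Λ) : V Λ := ket (D.dot (D.s i) lam) + ket lam

def straightenB (i : Fin D.n) (lam : Λ) : V Λ := ket (D.dot (D.s i) lam) + tHalf • ket lam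

def straightenC (i : Fin D.n) (lam : Λ) : V Λ :=
  ket (D.dot (D.s i) lam) + tHalf • ket (D.dot (D.s i) (D.lamOne l i lam)) +
    ket (D.lamOne l i lam) + tHalf • ket lam

variable {D l}

theorem straightenA_mem {i : Fin D.n} {lam : Λ} (h : (l : ℤ) ∣ D.pair i (lam + D.ρ)) :
    D.straightenA i lam ∈ D.Idl l := by
  obtain ⟨k, hk⟩ := h
  rcases le_or_gt 0 k with hk0 | hk0
  · exact Submodule.subset_span (Or.inl (Or.inl ⟨i, lam, ⟨k, hk0, by rw [hk, mul_comm]⟩, rfl⟩))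
  · have h : D.straightenA i (D.dot (D.s i) lam) ∈ D.Idl l :=
      Submodule.subset_span (Or.inl (Or.inl ⟨i, _, ⟨-k, by omega,
        by rw [pair_dot_s_add_ρ, hk]; ring⟩, rfl⟩))
    rwa [straightenA, dot_s_dot_s, add_comm] at h

theorem straightenB_mem {i : Fin D.n} {lam : Λ} (h₀ : 0 < D.pair i (lam + D.ρ))
    (hl : D.pair i (lam + D.ρ) < l) : D.straightenB i lam ∈ D.Idl l :=
  Submodule.subset_span (Or.inl (Or.inr ⟨i, lam, h₀, hl, rfl⟩))

theorem straightenC_mem_of_lt {i : Fin D.n} {lam : Λ} (hl : (l : ℤ) < D.pair i (lam + D.ρ))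
    (h : ¬ (l : ℤ) ∣ D.pair i (lam + D.ρ)) : D.straightenC l i lam ∈ D.Idl l :=
  Submodule.subset_span (Or.inr ⟨i, lam, hl, h, rfl⟩)

theorem straightenC_dot_s_lamOne (i : Fin D.n) (lam : Λ) :
    D.straightenC l i (D.dot (D.s i) (D.lamOne l i lam)) = D.straightenC l i lam := by
  have : D.lamOne l i (D.dot (D.s i) (D.lamOne l i lam)) = D.dot (D.s i) lam := by
    rw [lamOne, pair_dot_s_add_ρ, pair_lamOne_add_ρ, neg_sub, Int.emod_two_mul_emod_sub,
      dot_s_eq, dot_s_eq, pair_lamOne_add_ρ, lamOne]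
    module
  rw [straightenC, straightenC, this, dot_s_dot_s, dot_s_dot_s]
  abel

theorem straightenC_mem (hl : 0 < l) {i : Fin D.n} {lam : Λ}
    (h : ¬ (l : ℤ) ∣ D.pair i (lam + D.ρ)) : D.straightenC l i lam ∈ D.Idl l := by
  set M := D.pair i (lam + D.ρ)
  have hj : 0 < M % l := lt_of_le_of_ne (Int.emod_nonneg _ (by omega))
    (fun h0 => h (Int.dvd_of_emod_eq_zero h0.symm))
  rcases lt_or_gt_of_ne (show M ≠ 0 by rintro h0; exact h (h0 ▸ dvd_zero _)) with hneg | hpos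
  · -- the relation (c) at `s_i ∘ λ^{(1)}`, whose pairing exceeds `l`, has the same four terms
    have hpair : D.pair i (D.dot (D.s i) (D.lamOne l i lam) + D.ρ) = 2 * (M % l) - M := by
      rw [pair_dot_s_add_ρ, pair_lamOne_add_ρ]; ring
    have hq : M / l < 0 := Int.ediv_neg_of_neg_of_pos hneg (by omega)
    have hdiv := Int.emod_add_mul_ediv M l
    rw [← straightenC_dot_s_lamOne]
    refine straightenC_mem_of_lt (by rw [hpair]; nlinarith) ?_
    rw [hpair, Int.dvd_iff_emod_eq_zero, Int.emod_two_mul_emod_sub]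
    exact hj.ne'
  rcases lt_or_gt_of_ne (show M ≠ l by rintro h0; exact h (h0 ▸ dvd_refl _)) with hlt | hgt
  · have hlamOne := D.lamOne_eq_dot_s l hpos.le hlt
    have hB := straightenB_mem hpos hlt
    have hC : D.straightenC l i lam = D.straightenB i lam + D.straightenB i lam := by
      rw [straightenC, straightenB, hlamOne, dot_s_dot_s]; abel
    exact hC ▸ add_mem hB hB
  · exact straightenC_mem_of_lt hgt h

theorem translateV_straightenA (i : Fin D.n) (lam β : Λ) :
    translateV l β (D.straightenA i lam) =
      ket (D.dot (D.s i) (lam - l • D.σ (D.s i) β)) + ket (lam - l • β) := by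
  rw [straightenA, map_add, translateV_ket, translateV_ket, dot_s_sub_nsmul_σ_s]

theorem translateV_straightenB (i : Fin D.n) (lam β : Λ) :
    translateV l β (D.straightenB i lam) =
      ket (D.dot (D.s i) (lam - l • D.σ (D.s i) β)) + tHalf • ket (lam - l • β) := by
  rw [straightenB, map_add, map_smul, translateV_ket, translateV_ket, dot_s_sub_nsmul_σ_s]

theorem translateV_straightenC (i : Fin D.n) (lam β : Λ) :
    translateV l β (D.straightenC l i lam) =
      ket (D.dot (D.s i) (lam - l • D.σ (D.s i) β)) +
        tHalf • ket (D.dot (D.s i) (D.lamOne l i (lam - l • D.σ (D.s i) β))) +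
        ket (D.lamOne l i (lam - l • β)) + tHalf • ket (lam - l • β) := by
  simp only [straightenC, map_add, map_smul, translateV_ket, lamOne_sub_nsmul,
    dot_s_sub_nsmul_σ_s]

variable (D l) in
def TranslateStable (i : Fin D.n) (r : V Λ) : Prop :=
  ∀ β : Λ, translateV l β r + translateV l (D.σ (D.s i) β) r ∈ D.Idl l ∧
    (D.σ (D.s i) β = β → translateV l β r ∈ D.Idl l)

theorem translateStable_straightenA {i : Fin D.n} {lam : Λ}
    (h : (l : ℤ) ∣ D.pair i (lam + D.ρ)) : D.TranslateStable l i (D.straightenA i lam) := by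
  have hmem : ∀ x, D.straightenA i (lam - l • x) ∈ D.Idl l := fun x =>
    straightenA_mem ((D.dvd_pair_sub_nsmul_add_ρ_iff l i lam x).2 h)
  refine fun β => ⟨?_, fun hβ => ?_⟩
  · convert add_mem (hmem β) (hmem (D.σ (D.s i) β)) using 1
    rw [translateV_straightenA, translateV_straightenA, σ_s_σ_s, straightenA, straightenA]
    abel
  · rw [translateV_straightenA, hβ]
    exact hmem β

theorem translateStable_straightenB {i : Fin D.n} {lam : Λ} (h₀ : 0 < D.pair i (lam + D.ρ))
    (hl : D.pair i (lam + D.ρ) < l) : D.TranslateStable l i (D.straightenB i lam) := by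
  refine fun β => ⟨?_, fun hβ => ?_⟩
  · have hlamOne : D.lamOne l i (lam - l • β) = D.dot (D.s i) (lam - l • D.σ (D.s i) β) := by
      rw [lamOne_sub_nsmul, D.lamOne_eq_dot_s l h₀.le hl, dot_s_sub_nsmul_σ_s]
    have hC : ¬ (l : ℤ) ∣ D.pair i (lam - l • β + D.ρ) := by
      rw [dvd_pair_sub_nsmul_add_ρ_iff]
      exact fun hd => h₀.ne' (Int.eq_zero_of_dvd_of_nonneg_of_lt h₀.le hl hd)
    convert straightenC_mem (by omega) hC using 1
    rw [translateV_straightenB, translateV_straightenB, σ_s_σ_s, straightenC, hlamOne,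
      dot_s_dot_s]
    abel
  · have hpair : D.pair i (lam - l • β + D.ρ) = D.pair i (lam + D.ρ) := by
      rw [pair_sub_nsmul_add_ρ, D.pair_eq_zero_of_σ_s_eq hβ, mul_zero, sub_zero]
    rw [translateV_straightenB, hβ]
    exact straightenB_mem (hpair ▸ h₀) (hpair ▸ hl)

theorem translateStable_straightenC (hl : 0 < l) {i : Fin D.n} {lam : Λ}
    (h : ¬ (l : ℤ) ∣ D.pair i (lam + D.ρ)) : D.TranslateStable l i (D.straightenC l i lam) := by
  have hmem : ∀ x, D.straightenC l i (lam - l • x) ∈ D.Idl l := fun x =>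
    straightenC_mem hl (mt (D.dvd_pair_sub_nsmul_add_ρ_iff l i lam x).1 h)
  refine fun β => ⟨?_, fun hβ => ?_⟩
  · convert add_mem (hmem β) (hmem (D.σ (D.s i) β)) using 1
    rw [translateV_straightenC, translateV_straightenC, σ_s_σ_s, straightenC, straightenC]
    abel
  · rw [translateV_straightenC, hβ]
    exact hmem β

theorem TranslateStable.sum_smul_opX_mem {i : Fin D.n} {r : V Λ} (hr : D.TranslateStable l i r)
    {ι : Type*} (S : Finset ι) (c : ι → K) (e : ι → Λ) (u : ι → ι) (hS : ∀ k ∈ S, u k ∈ S)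
    (hu : ∀ k, u (u k) = k) (hc : ∀ k, c (u k) = c k)
    (he : ∀ k, D.σ D.w0 (e (u k)) = D.σ (D.s i) (D.σ D.w0 (e k))) :
    ∑ k ∈ S, c k • D.opX l (e k) r ∈ D.Idl l := by
  refine Submodule.sum_smul_mem_of_involutive _ S u hS hu c hc _ (fun k => ?_) (fun k hk => ?_)
  · rw [opX_eq_translateV, opX_eq_translateV, he]
    exact (hr _).1
  · exact (hr _).2 (by rw [← he, hk])

theorem sum_smul_opX_mem_Idl (hl : 0 < l) {ι : Type*} (S : Finset ι) (c : ι → K) (e : ι → Λ)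
    (u : Fin D.n → ι → ι) (hS : ∀ i, ∀ k ∈ S, u i k ∈ S) (hu : ∀ i k, u i (u i k) = k)
    (hc : ∀ i k, c (u i k) = c k)
    (he : ∀ i k, D.σ D.w0 (e (u i k)) = D.σ (D.s i) (D.σ D.w0 (e k))) :
    ∀ x ∈ D.Idl l, ∑ k ∈ S, c k • D.opX l (e k) x ∈ D.Idl l := by
  suffices D.Idl l ≤ (D.Idl l).comap (∑ k ∈ S, c k • D.opX l (e k)) by
    intro x hx
    simpa using this hx
  refine Submodule.span_le.2 fun r hr => ?_
  obtain ⟨i, hi⟩ : ∃ i, D.TranslateStable l i r := by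
    rcases hr with (⟨i, lam, ⟨k, -, hk⟩, rfl⟩ | ⟨i, lam, h₀, hlt, rfl⟩) | ⟨i, lam, -, h, rfl⟩
    · exact ⟨i, translateStable_straightenA ⟨k, by rw [hk, mul_comm]⟩⟩
    · exact ⟨i, translateStable_straightenB h₀ hlt⟩
    · exact ⟨i, translateStable_straightenC hl h⟩
  simpa using hi.sum_smul_opX_mem S c e (u i) (hS i) (hu i) (hc i) (he i)

end RootData

end

/-- Proposition 1.1: for every `μ ∈ a_ℤ^*` the operator
`v ↦ ∑_{w ∈ W₀} X^{wμ} · v` (level `-(l+h)` action) maps `I` into `I`; more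
generally every `W₀`-invariant element of `K[X]` preserves `I`; consequently the
level `-(l+h)` action induces a well-defined `K`-linear action of `K[X]^{W₀}` on
`F_l = V/I`, satisfying `(∑_{w ∈ W₀} X^{wμ}) · |γ⟩ = ∑_{w ∈ W₀} |γ - l w₀(wμ)⟩`. -/
theorem statement0 {Λ W : Type} [AddCommGroup Λ] [Group W] [Fintype W]
    (D : RootData Λ W) (l : ℕ) (hl : 0 < l) (mu : Λ) :
    Submodule.map (∑ w : W, D.opX l (D.σ w mu)) (D.Idl l) ≤ D.Idl l ∧
    (∀ g : Λ →₀ K, (∀ (w : W) (nu : Λ), g (D.σ w nu) = g nu) →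
      ∀ x ∈ D.Idl l, D.actKX l g x ∈ D.Idl l) ∧
    ∃ Φ : (V Λ ⧸ D.Idl l) →ₗ[K] (V Λ ⧸ D.Idl l),
      ∀ gam : Λ, Φ (Submodule.Quotient.mk (ket gam)) =
        ∑ w : W, (Submodule.Quotient.mk (ket (gam - l • D.σ D.w0 (D.σ w mu)))
          : V Λ ⧸ D.Idl l) := by
  set u : Fin D.n → W := fun i => D.w0⁻¹ * D.s i * D.w0
  have hu (i : Fin D.n) (x : Λ) : D.σ (u i) (D.σ (u i) x) = x := by
    rw [← D.σ_mul_apply, D.conj_s_mul_conj_s, map_one]; rfl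
  have hmap : Submodule.map (∑ w : W, D.opX l (D.σ w mu)) (D.Idl l) ≤ D.Idl l := by
    rintro _ ⟨x, hx, rfl⟩
    simpa using RootData.sum_smul_opX_mem_Idl (D := D) hl Finset.univ (fun _ => 1)
      (fun w => D.σ w mu) (fun i w => u i * w) (fun _ _ _ => Finset.mem_univ _)
      (fun i w => by rw [← mul_assoc, D.conj_s_mul_conj_s, one_mul]) (fun _ _ => rfl)
      (fun i w => by rw [D.σ_mul_apply, D.σ_w0_σ_conj_s]) x hx
  have hact : ∀ g : Λ →₀ K, (∀ (w : W) (nu : Λ), g (D.σ w nu) = g nu) →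
      ∀ x ∈ D.Idl l, D.actKX l g x ∈ D.Idl l := fun g hg =>
    RootData.sum_smul_opX_mem_Idl (D := D) hl g.support g id (fun i => D.σ (u i))
      (fun i ν hν => by rw [Finsupp.mem_support_iff, hg]; exact Finsupp.mem_support_iff.1 hν)
      hu (fun i ν => hg _ _) (fun i ν => D.σ_w0_σ_conj_s i ν)
  refine ⟨hmap, hact, Submodule.mapQ _ _ _ (Submodule.map_le_iff_le_comap.1 hmap), fun gam => ?_⟩
  simp only [Submodule.mapQ_apply, LinearMap.sum_apply, RootData.opX_eq_translateV, translateV_ket]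
  exact map_sum (D.Idl l).mkQ _ _
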